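/- On R^4 with the Poisson brackets from the group A_{4,2}^{-1} (P with nonzero entries P^{12} = p12 + p13 x4, P^{13} = p13, P^{23} = e^{2x4} p23, P^{24} = e^{x4} p24; P' with nonzero entries P'^{12} = p'_{12} + a23 x3 + a24 x4 + (a53 p13/p23) x3 x4, P'^{13} = (a53 p13/p23) x3, P'^{23} = a53 e^{2x4} x3, P'^{24} = e^{x4}(p'_{24} + a64 x4)), assume p13 p24 p23 ≠ 0. Then H1 = (p23 p'_{24} + a53 p24 x3 + a64 p23 x4)/(p23 p24) and H2 = (1/2)(a53^2 x3^2/p23^2 + (p'_{24} + a64 x4)^2/p24^2) satisfy {H1,H2} = 0 and {H1,H2}' = 0. -/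

import Mathlib

open scoped BigOperators

noncomputable def pd {m : ℕ} (μ : Fin m) (f : (Fin m → ℝ) → ℝ) (x : Fin m → ℝ) : ℝ :=
  fderiv ℝ f x (Pi.single μ 1)

/-- Poisson bracket associated to a bivector field `P`. -/
noncomputable def pbrk {m : ℕ} (P : (Fin m → ℝ) → Fin m → Fin m → ℝ)
    (f g : (Fin m → ℝ) → ℝ) (x : Fin m → ℝ) : ℝ :=
  ∑ μ, ∑ ν, P x μ ν * pd μ f x * pd ν g x

/-- Schouten bracket `[P,P]^{λμν}`. -/
noncomputable def schouten {m : ℕ} (P : (Fin m → ℝ) → Fin m → Fin m → ℝ)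
    (l μ ν : Fin m) (x : Fin m → ℝ) : ℝ :=
  ∑ ρ, (P x ρ l * pd ρ (fun y => P y μ ν) x
      + P x ρ ν * pd ρ (fun y => P y l μ) x
      + P x ρ μ * pd ρ (fun y => P y ν l) x)

/-- Mixed Schouten bracket `[P,Q]^{λμν}`. -/
noncomputable def schoutenMixed {m : ℕ} (P Q : (Fin m → ℝ) → Fin m → Fin m → ℝ)
    (l μ ν : Fin m) (x : Fin m → ℝ) : ℝ :=
  ∑ ρ, (P x ρ l * pd ρ (fun y => Q y μ ν) x + Q x ρ l * pd ρ (fun y => P y μ ν) x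
      + P x ρ ν * pd ρ (fun y => Q y l μ) x + Q x ρ ν * pd ρ (fun y => P y l μ) x
      + P x ρ μ * pd ρ (fun y => Q y ν l) x + Q x ρ μ * pd ρ (fun y => P y ν l) x)

/-- The Poisson bivector `P` on the group `A_{4,2}^{-1}`. -/
noncomputable def P42 (p12 p13 p23 p24 : ℝ) : (Fin 4 → ℝ) → Fin 4 → Fin 4 → ℝ :=
  fun x μ ν =>
    let A := p12 + p13 * x 3
    let B := Real.exp (2 * x 3) * p23
    let C := Real.exp (x 3) * p24
    !![0, A, p13, 0;
       -A, 0, B, C;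
       -p13, -B, 0, 0;
       0, -C, 0, 0] μ ν

/-- The Poisson bivector `P'` on the group `A_{4,2}^{-1}`. -/
noncomputable def P42' (p13 p23 p12' p24' a23 a24 a53 a64 : ℝ) :
    (Fin 4 → ℝ) → Fin 4 → Fin 4 → ℝ :=
  fun x μ ν =>
    let A := p12' + a23 * x 2 + a24 * x 3 + a53 * p13 / p23 * x 2 * x 3
    let B := a53 * p13 / p23 * x 2
    let C := a53 * Real.exp (2 * x 3) * x 2
    let D := Real.exp (x 3) * (p24' + a64 * x 3)
    !![0, A, B, 0;
       -A, 0, C, D;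
       -B, -C, 0, 0;
       0, -D, 0, 0] μ ν

/-!
Both Hamiltonians are functions of `x3, x4` alone (coordinates `2, 3` of `Fin 4`), and both
bivectors have vanishing `(3,4)` block. Hence every term `P^{μν} ∂_μ H1 ∂_ν H2` of either bracket
contains either a vanishing entry of the bivector or a derivative of `H1` or `H2` in a direction
on which it does not depend.
-/

theorem pd_eq_zero_of_dependsOn {m : ℕ} {f : (Fin m → ℝ) → ℝ} {s : Set (Fin m)}
    (hf : DependsOn f s) {μ : Fin m} (hμ : μ ∉ s) (x : Fin m → ℝ) : pd μ f x = 0 := by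
  by_cases hdiff : DifferentiableAt ℝ f x
  · have hline : (fun t : ℝ => f (x + t • Pi.single μ 1)) = fun _ => f x := by
      funext t
      refine hf fun i hi => ?_
      simp [ne_of_mem_of_not_mem hi hμ]
    rw [pd, ← hdiff.lineDeriv_eq_fderiv, lineDeriv, hline, deriv_const]
  · rw [pd, fderiv_zero_of_not_differentiableAt hdiff, zero_apply]

theorem pbrk_eq_zero_of_dependsOn {m : ℕ} {P : (Fin m → ℝ) → Fin m → Fin m → ℝ}
    {f g : (Fin m → ℝ) → ℝ} {s : Set (Fin m)} (hf : DependsOn f s) (hg : DependsOn g s)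
    {x : Fin m → ℝ} (hP : ∀ μ ∈ s, ∀ ν ∈ s, P x μ ν = 0) : pbrk P f g x = 0 := by
  refine Finset.sum_eq_zero fun μ _ => Finset.sum_eq_zero fun ν _ => ?_
  by_cases hμ : μ ∈ s
  · by_cases hν : ν ∈ s
    · rw [hP μ hμ ν hν, zero_mul, zero_mul]
    · rw [pd_eq_zero_of_dependsOn hg hν, mul_zero]
  · rw [pd_eq_zero_of_dependsOn hf hμ, mul_zero, zero_mul]

theorem A42_bi_involution_general (p12 p13 p23 p24 p12' p24' a23 a24 a53 a64 : ℝ) :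
    let H1 : (Fin 4 → ℝ) → ℝ := fun x =>
      (p23 * p24' + a53 * p24 * x 2 + a64 * p23 * x 3) / (p23 * p24)
    let H2 : (Fin 4 → ℝ) → ℝ := fun x =>
      (1 / 2) * (a53 ^ 2 * (x 2) ^ 2 / p23 ^ 2 + (p24' + a64 * x 3) ^ 2 / p24 ^ 2)
    (∀ x, pbrk (P42 p12 p13 p23 p24) H1 H2 x = 0) ∧
    (∀ x, pbrk (P42' p13 p23 p12' p24' a23 a24 a53 a64) H1 H2 x = 0) := by
  intro H1 H2
  have hH1 : DependsOn H1 {2, 3} := fun y z h => by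
    simp only [H1, h 2 (by simp), h 3 (by simp)]
  have hH2 : DependsOn H2 {2, 3} := fun y z h => by
    simp only [H2, h 2 (by simp), h 3 (by simp)]
  refine ⟨fun x => pbrk_eq_zero_of_dependsOn hH1 hH2 ?_,
    fun x => pbrk_eq_zero_of_dependsOn hH1 hH2 ?_⟩ <;>
  · simp [P42, P42']

theorem A42_bi_involution (p12 p13 p23 p24 p12' p24' a23 a24 a53 a64 : ℝ)
    (hne : p13 * p24 * p23 ≠ 0) :
    let H1 : (Fin 4 → ℝ) → ℝ := fun x =>
      (p23 * p24' + a53 * p24 * x 2 + a64 * p23 * x 3) / (p23 * p24)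
    let H2 : (Fin 4 → ℝ) → ℝ := fun x =>
      (1 / 2) * (a53 ^ 2 * (x 2) ^ 2 / p23 ^ 2 + (p24' + a64 * x 3) ^ 2 / p24 ^ 2)
    (∀ x, pbrk (P42 p12 p13 p23 p24) H1 H2 x = 0) ∧
    (∀ x, pbrk (P42' p13 p23 p12' p24' a23 a24 a53 a64) H1 H2 x = 0) :=
  A42_bi_involution_general p12 p13 p23 p24 p12' p24' a23 a24 a53 a64
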